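/- arXiv:2412.21124 — 2 statements merged into one kernel-verified Lean document; each statement's English description precedes it below -/
import Mathlib

section
/- For Adam iterates with m_k = β₁ m_{k-1} + (1-β₁)g_k, v_k = β₂ v_{k-1} + (1-β₂)g_k², v₀ > 0 coordinate-wise, m₀ = 0, and update w_{k+1} = w_k - α m_k ⊙ v_k^{-1/2}, each coordinate satisfies |w_{k+1,i} - w_{k,i}| ≤ α(1-β₁)/(√(1-β₂)·√(1-β₁²/β₂)). -/
/-- Each coordinate of an Adam update step is uniformly bounded:
`|w_{k+1,i} - w_{k,i}| ≤ α(1-β₁)/(√(1-β₂)·√(1-β₁²/β₂))`. -/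
theorem adam_step_coordinate_bound {d : ℕ} (α β₁ β₂ : ℝ)
    (hα : 0 < α) (h1 : 0 < β₁ ^ 2) (h2 : β₁ ^ 2 < β₂) (h3 : β₂ < 1)
    (g m v w : ℕ → Fin d → ℝ)
    (hm0 : m 0 = 0) (hv0 : ∀ i, 0 < v 0 i)
    (hm : ∀ k i, m (k + 1) i = β₁ * m k i + (1 - β₁) * g (k + 1) i)
    (hv : ∀ k i, v (k + 1) i = β₂ * v k i + (1 - β₂) * (g (k + 1) i) ^ 2)
    (hw : ∀ k i, w (k + 1) i = w k i - α * m k i / Real.sqrt (v k i)) :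
    ∀ k i, |w (k + 1) i - w k i|
      ≤ α * (1 - β₁) / (Real.sqrt (1 - β₂) * Real.sqrt (1 - β₁ ^ 2 / β₂)) := by
  have hβ₂ : 0 < β₂ := lt_trans h1 h2
  have hK1 : 0 < 1 - β₂ := by linarith
  have hK2 : 0 < 1 - β₁ ^ 2 / β₂ := by
    have : β₁ ^ 2 / β₂ < 1 := (div_lt_one hβ₂).mpr h2
    linarith
  have hb1 : 0 < 1 - β₁ := by nlinarith [sq_nonneg β₁]
  -- positivity of v
  have hvpos : ∀ k i, 0 < v k i := by
    intro k
    induction k with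
    | zero => exact hv0
    | succ n ih =>
      intro i
      rw [hv n i]
      nlinarith [ih i, sq_nonneg (g (n + 1) i)]
  -- key invariant
  have key : ∀ k i, (m k i) ^ 2 * ((1 - β₂) * (β₂ - β₁ ^ 2))
      ≤ (1 - β₁) ^ 2 * β₂ * v k i := by
    intro k
    induction k with
    | zero =>
      intro i
      rw [hm0]
      simp
      nlinarith [mul_pos (mul_pos (mul_pos hb1 hb1) hβ₂) (hv0 i)]
    | succ n ih =>
      intro i
      rw [hm n i, hv n i]
      have h := ih i
      nlinarith [sq_nonneg ((β₂ - β₁ ^ 2) * m n i - β₁ * (1 - β₁) * g (n + 1) i)]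
  intro k i
  rw [hw k i]
  have heq : w k i - α * m k i / Real.sqrt (v k i) - w k i
      = -(α * m k i / Real.sqrt (v k i)) := by ring
  rw [heq, abs_neg, abs_div, abs_mul, abs_of_pos hα,
    abs_of_nonneg (Real.sqrt_nonneg _)]
  have hvk := hvpos k i
  rw [div_le_div_iff₀ (Real.sqrt_pos.mpr hvk) (by positivity)]
  -- core inequality without α
  have hmv : |m k i| * Real.sqrt ((1 - β₂) * (1 - β₁ ^ 2 / β₂))
      ≤ (1 - β₁) * Real.sqrt (v k i) := by
    have h1' : |m k i| * Real.sqrt ((1 - β₂) * (1 - β₁ ^ 2 / β₂))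
        = Real.sqrt ((m k i) ^ 2 * ((1 - β₂) * (1 - β₁ ^ 2 / β₂))) := by
      rw [Real.sqrt_mul (sq_nonneg _), Real.sqrt_sq_eq_abs]
    have h2' : (1 - β₁) * Real.sqrt (v k i)
        = Real.sqrt ((1 - β₁) ^ 2 * v k i) := by
      rw [Real.sqrt_mul (sq_nonneg _), Real.sqrt_sq hb1.le]
    rw [h1', h2']
    apply Real.sqrt_le_sqrt
    have hk := key k i
    have e : (1 - β₂) * (1 - β₁ ^ 2 / β₂) = (1 - β₂) * (β₂ - β₁ ^ 2) / β₂ := by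
      field_simp
    rw [e, ← mul_div_assoc, div_le_iff₀ hβ₂]
    nlinarith [hk]
  calc α * |m k i| * (Real.sqrt (1 - β₂) * Real.sqrt (1 - β₁ ^ 2 / β₂))
      = α * (|m k i| * Real.sqrt ((1 - β₂) * (1 - β₁ ^ 2 / β₂))) := by
        rw [Real.sqrt_mul hK1.le]; ring
    _ ≤ α * ((1 - β₁) * Real.sqrt (v k i)) :=
        mul_le_mul_of_nonneg_left hmv hα.le
    _ = α * (1 - β₁) * Real.sqrt (v k i) := by ring
end

section
/- If v_k = β₂ v_{k-1} + (1-β₂) g_k² with v₀ ≥ 0 coordinate-wise and m_k = β₁ m_{k-1} + (1-β₁) g_k with m₀ = 0 and β₁ ≤ √β₂, then m_{k,i}² ≤ v_{k,i} · (1-β₁)²/((1-β₂)(1-β₁²/β₂)) for every k ≥ 1 and coordinate i with v_{k,i} > 0. -/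
/-!
Write `r = β₁² / β₂ < 1` and `c = (1 - β₁)² / ((1 - β₂)(1 - r))`. Cauchy–Schwarz with weights `r`
and `1 - r` gives `(β₁ a + b)² ≤ β₂ a² + b² / (1 - r)`, so one step of both recursions turns
`m² ≤ c v` into `m'² ≤ β₂ c v + (1 - β₂) c g² = c v'`. Since `m₀ = 0` and `v₀ ≥ 0`, the invariant
`m_k² ≤ c v_k` holds for every `k`.
-/

section

variable {K : Type*} [Field K] [LinearOrder K] [IsStrictOrderedRing K]

theorem sq_mul_add_le_of_sq_lt {p q : K} (h : p ^ 2 < q) (a b : K) :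
    (p * a + b) ^ 2 ≤ q * a ^ 2 + b ^ 2 / (1 - p ^ 2 / q) := by
  have hq : 0 < q := (sq_nonneg p).trans_lt h
  have hs : 0 < 1 - p ^ 2 / q := sub_pos.2 ((div_lt_one hq).2 h)
  -- completing the square; the discriminant vanishes because `q - p² = q (1 - p²/q)`
  have hdiff : q * a ^ 2 + b ^ 2 / (1 - p ^ 2 / q) - (p * a + b) ^ 2
      = (q * (1 - p ^ 2 / q) * a - p * b) ^ 2 / (q * (1 - p ^ 2 / q)) := by
    field_simp
    ring
  exact sub_nonneg.1 (hdiff ▸ by positivity)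

theorem sq_le_mul_of_ema {β₁ β₂ : K} (hβ : β₁ ^ 2 < β₂) (hβ₂ : β₂ < 1) {g m v : ℕ → K}
    (hm0 : m 0 = 0) (hv0 : 0 ≤ v 0)
    (hm : ∀ k, m (k + 1) = β₁ * m k + (1 - β₁) * g (k + 1))
    (hv : ∀ k, v (k + 1) = β₂ * v k + (1 - β₂) * g (k + 1) ^ 2) (k : ℕ) :
    m k ^ 2 ≤ v k * ((1 - β₁) ^ 2 / ((1 - β₂) * (1 - β₁ ^ 2 / β₂))) := by
  have hβ₂_pos : 0 < β₂ := (sq_nonneg β₁).trans_lt hβ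
  have hr : 0 < 1 - β₁ ^ 2 / β₂ := sub_pos.2 ((div_lt_one hβ₂_pos).2 hβ)
  have hβ₂' : 0 < 1 - β₂ := sub_pos.2 hβ₂
  set c := (1 - β₁) ^ 2 / ((1 - β₂) * (1 - β₁ ^ 2 / β₂))
  induction k with
  | zero => rw [hm0]; simpa using mul_nonneg hv0 (by positivity)
  | succ k ih =>
    calc m (k + 1) ^ 2
        ≤ β₂ * m k ^ 2 + ((1 - β₁) * g (k + 1)) ^ 2 / (1 - β₁ ^ 2 / β₂) := by
          rw [hm]; exact sq_mul_add_le_of_sq_lt hβ _ _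
      _ ≤ β₂ * (v k * c) + (1 - β₂) * g (k + 1) ^ 2 * c := by
          gcongr
          exact le_of_eq (by unfold c; field_simp)
      _ = v (k + 1) * c := by rw [hv]; ring

end

theorem adam_moment_ratio_bound_general {d : ℕ} (β₁ β₂ : ℝ)
    (h2 : β₁ ^ 2 < β₂) (h3 : β₂ < 1)
    (g m v : ℕ → Fin d → ℝ)
    (hm0 : m 0 = 0) (hv0 : ∀ i, 0 ≤ v 0 i)
    (hm : ∀ k i, m (k + 1) i = β₁ * m k i + (1 - β₁) * g (k + 1) i)
    (hv : ∀ k i, v (k + 1) i = β₂ * v k i + (1 - β₂) * (g (k + 1) i) ^ 2) :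
    ∀ k, 1 ≤ k → ∀ i, 0 < v k i →
      (m k i) ^ 2 ≤ v k i * ((1 - β₁) ^ 2 / ((1 - β₂) * (1 - β₁ ^ 2 / β₂))) :=
  fun k _ i _ => sq_le_mul_of_ema (g := (g · i)) (m := (m · i)) (v := (v · i)) h2 h3
    (congrFun hm0 i) (hv0 i) (hm · i) (hv · i) k

/-- Cauchy–Schwarz bound relating Adam's first and second moment EMAs:
`m_{k,i}² ≤ v_{k,i} · (1-β₁)²/((1-β₂)(1-β₁²/β₂))` whenever `v_{k,i} > 0`. -/
theorem adam_moment_ratio_bound {d : ℕ} (β₁ β₂ : ℝ)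
    (h1 : 0 < β₁ ^ 2) (h2 : β₁ ^ 2 < β₂) (h3 : β₂ < 1)
    (hβ : β₁ ≤ Real.sqrt β₂)
    (g m v : ℕ → Fin d → ℝ)
    (hm0 : m 0 = 0) (hv0 : ∀ i, 0 ≤ v 0 i)
    (hm : ∀ k i, m (k + 1) i = β₁ * m k i + (1 - β₁) * g (k + 1) i)
    (hv : ∀ k i, v (k + 1) i = β₂ * v k i + (1 - β₂) * (g (k + 1) i) ^ 2) :
    ∀ k, 1 ≤ k → ∀ i, 0 < v k i →
      (m k i) ^ 2 ≤ v k i * ((1 - β₁) ^ 2 / ((1 - β₂) * (1 - β₁ ^ 2 / β₂))) :=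
  adam_moment_ratio_bound_general β₁ β₂ h2 h3 g m v hm0 hv0 hm hv
end
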